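/- For the bi-objective problem LOZJ with f1 = LeadingOnes and f2 = ZeroJump_k on bit-strings of length n, where k is an integer with 1 < k < n/2, the Pareto front, i.e. the image of the Pareto set under (f1, f2), equals exactly { (0, n+k) } ∪ { (i, n+k−i) : i ∈ {k, k+1, …, n} }. -/

import Mathlib

open Finset

/-- Number of one-bits of a bit-string. -/
def onesCount {n : ℕ} (x : Fin n → Bool) : ℕ :=
  (Finset.univ.filter fun i => x i = true).card

/-- Number of zero-bits of a bit-string. -/
def zerosCount {n : ℕ} (x : Fin n → Bool) : ℕ :=
  (Finset.univ.filter fun i => x i = false).card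

/-- Number of leading one-bits. -/
def leadingOnes {n : ℕ} (x : Fin n → Bool) : ℕ :=
  (Finset.univ.filter fun i : Fin n => ∀ j : Fin n, j ≤ i → x j = true).card

/-- Number of trailing zero-bits. -/
def trailingZeroes {n : ℕ} (x : Fin n → Bool) : ℕ :=
  (Finset.univ.filter fun i : Fin n => ∀ j : Fin n, i ≤ j → x j = false).card

/-- `y` dominates `x` for the bi-objective maximisation problem `(f1, f2)`. -/
def dominates {n : ℕ} (f1 f2 : (Fin n → Bool) → ℕ) (y x : Fin n → Bool) : Prop :=
  f1 x ≤ f1 y ∧ f2 x ≤ f2 y ∧ (f1 x < f1 y ∨ f2 x < f2 y)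

/-- `x` is Pareto optimal: no solution dominates it. -/
def paretoOptimal {n : ℕ} (f1 f2 : (Fin n → Bool) → ℕ) (x : Fin n → Bool) : Prop :=
  ∀ y, ¬ dominates f1 f2 y x

/-- `x` is a non-global Pareto local optimum: not Pareto optimal, and not dominated by
any bit-string at Hamming distance exactly 1. -/
def nonGlobalParetoLocalOpt {n : ℕ} (f1 f2 : (Fin n → Bool) → ℕ) (x : Fin n → Bool) : Prop :=
  ¬ paretoOptimal f1 f2 x ∧ ∀ y, hammingDist y x = 1 → ¬ dominates f1 f2 y x

/-- The ZeroJump function with jump parameter `k`. -/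
def zeroJump (n k : ℕ) (x : Fin n → Bool) : ℕ :=
  if zerosCount x ≤ n - k ∨ x = (fun _ => false) then k + zerosCount x else n - zerosCount x

/-- The OneJump function with jump parameter `k`. -/
def oneJump (n k : ℕ) (x : Fin n → Bool) : ℕ :=
  if onesCount x ≤ n - k ∨ x = (fun _ => true) then k + onesCount x else n - onesCount x

/-- Block `j` (0-indexed) of the bit-string `x` (with `b` blocks of length `ℓ`) is all-ones. -/
def blockAllOnes (b ℓ : ℕ) (x : Fin (b * ℓ) → Bool) (j : Fin b) : Prop :=
  ∀ i : Fin (b * ℓ), (i : ℕ) / ℓ = (j : ℕ) → x i = true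

/-- Block `j` (0-indexed) of the bit-string `x` is all-zeros. -/
def blockAllZeros (b ℓ : ℕ) (x : Fin (b * ℓ) → Bool) (j : Fin b) : Prop :=
  ∀ i : Fin (b * ℓ), (i : ℕ) / ℓ = (j : ℕ) → x i = false

instance (b ℓ : ℕ) (x : Fin (b * ℓ) → Bool) (j : Fin b) : Decidable (blockAllOnes b ℓ x j) := by
  unfold blockAllOnes; infer_instance

instance (b ℓ : ℕ) (x : Fin (b * ℓ) → Bool) (j : Fin b) : Decidable (blockAllZeros b ℓ x j) := by
  unfold blockAllZeros; infer_instance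

/-- OneRoyalRoad: `ℓ` times the number of all-ones blocks. -/
def oneRoyalRoad (b ℓ : ℕ) (x : Fin (b * ℓ) → Bool) : ℕ :=
  ℓ * (Finset.univ.filter fun j : Fin b => blockAllOnes b ℓ x j).card

/-- ZeroRoyalRoad: `ℓ` times the number of all-zeros blocks. -/
def zeroRoyalRoad (b ℓ : ℕ) (x : Fin (b * ℓ) → Bool) : ℕ :=
  ℓ * (Finset.univ.filter fun j : Fin b => blockAllZeros b ℓ x j).card

/-- Number of one-bits in block `j` of `x`. -/
def blockOnes (b ℓ : ℕ) (x : Fin (b * ℓ) → Bool) (j : Fin b) : ℕ :=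
  (Finset.univ.filter fun i : Fin (b * ℓ) => (i : ℕ) / ℓ = (j : ℕ) ∧ x i = true).card

/-- Number of zero-bits in block `j` of `x`. -/
def blockZeros (b ℓ : ℕ) (x : Fin (b * ℓ) → Bool) (j : Fin b) : ℕ :=
  (Finset.univ.filter fun i : Fin (b * ℓ) => (i : ℕ) / ℓ = (j : ℕ) ∧ x i = false).card

lemma ones_add_zeros {n : ℕ} (x : Fin n → Bool) : onesCount x + zerosCount x = n := by
  classical
  have := Finset.card_filter_add_card_filter_not
    (s := (univ : Finset (Fin n))) (p := fun i => x i = true)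
  simpa [onesCount, zerosCount, Bool.not_eq_true] using this

lemma zerosCount_le {n : ℕ} (x : Fin n → Bool) : zerosCount x ≤ n := by
  simpa [zerosCount] using Finset.card_filter_le (univ : Finset (Fin n)) fun i => x i = false

lemma leadingOnes_le_onesCount {n : ℕ} (x : Fin n → Bool) : leadingOnes x ≤ onesCount x := by
  apply Finset.card_le_card
  intro i hi
  simp only [mem_filter, mem_univ, true_and] at *
  exact hi i le_rfl

lemma leadingOnes_le {n : ℕ} (x : Fin n → Bool) : leadingOnes x ≤ n := by
  simpa [leadingOnes] using Finset.card_filter_le (univ : Finset (Fin n)) _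

lemma card_lt_filter (n i : ℕ) (h : i ≤ n) :
    (univ.filter fun j : Fin n => (j:ℕ) < i).card = i := by
  rcases lt_or_eq_of_le h with h' | rfl
  · have : (univ.filter fun j : Fin n => (j:ℕ) < i) = Finset.Iio ⟨i, h'⟩ := by
      ext j; simp [Fin.lt_def]
    rw [this, Fin.card_Iio]
  · have : (univ.filter fun j : Fin i => (j:ℕ) < i) = univ := by
      ext j; simp [j.isLt]
    rw [this, card_univ, Fintype.card_fin]

def pat (n i : ℕ) : Fin n → Bool := fun j => decide ((j:ℕ) < i)

lemma onesCount_pat (n i : ℕ) (h : i ≤ n) : onesCount (pat n i) = i := by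
  unfold onesCount pat
  simpa using card_lt_filter n i h

lemma zerosCount_pat (n i : ℕ) (h : i ≤ n) : zerosCount (pat n i) = n - i := by
  have h1 := ones_add_zeros (pat n i)
  rw [onesCount_pat n i h] at h1
  omega

lemma leadingOnes_pat (n i : ℕ) (h : i ≤ n) : leadingOnes (pat n i) = i := by
  unfold leadingOnes
  simp only [pat]
  have : (univ.filter fun p : Fin n => ∀ j : Fin n, j ≤ p → decide ((j:ℕ) < i) = true)
      = univ.filter fun j : Fin n => (j:ℕ) < i := by
    ext p
    simp only [mem_filter, mem_univ, true_and, decide_eq_true_eq]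
    constructor
    · intro hp; simpa using hp p le_rfl
    · intro hp j hj; exact lt_of_le_of_lt hj hp
  convert (congrArg Finset.card this).trans (card_lt_filter n i h)
  ext p; simp [pat]

lemma zerosCount_eq_iff {n : ℕ} (x : Fin n → Bool) :
    x = (fun _ => false) ↔ zerosCount x = n := by
  constructor
  · rintro rfl; unfold zerosCount; simp
  · intro h
    have : (univ.filter fun i => x i = false) = univ := by
      apply Finset.eq_univ_of_card; simpa [zerosCount] using h
    funext i
    have := Finset.mem_filter.mp (this ▸ Finset.mem_univ i)
    exact this.2

lemma leadingOnes_zero (n : ℕ) : leadingOnes (fun _ : Fin n => false) = 0 := by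
  unfold leadingOnes
  rw [Finset.card_eq_zero]
  ext i; simp only [mem_filter, mem_univ, true_and, Finset.notMem_empty, iff_false]
  intro h; exact absurd (h i le_rfl) (by simp)

lemma zeroJump_zero (n k : ℕ) : zeroJump n k (fun _ : Fin n => false) = k + n := by
  unfold zeroJump
  rw [if_pos (Or.inr rfl)]
  congr 1
  have := (zerosCount_eq_iff (fun _ : Fin n => false)).mp rfl
  omega

lemma zeroJump_le {n k : ℕ} (hk : k ≤ n) (x : Fin n → Bool) (hx : x ≠ (fun _ => false)) :
    zeroJump n k x ≤ n := by
  unfold zeroJump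
  split
  · rename_i h
    rcases h with h | h
    · omega
    · exact absurd h hx
  · omega

lemma pat_ne_zero (n i : ℕ) (hn : 0 < n) (hi : 0 < i) : pat n i ≠ (fun _ => false) := by
  intro h
  have := congrFun h ⟨0, hn⟩
  simp [pat, hi] at this

lemma zeroJump_pat (n k i : ℕ) (hki : k ≤ i) (hin : i ≤ n) :
    zeroJump n k (pat n i) = k + (n - i) := by
  unfold zeroJump
  rw [zerosCount_pat n i hin, if_pos (Or.inl (by omega))]


/-- For LOZJ with 1 < k < n/2, the Pareto front, i.e. the image of the Pareto
set under (f1, f2), equals { (0, n+k) } ∪ { (i, n+k−i) : k ≤ i ≤ n }. -/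
theorem LOZJ_pareto_front (n k : ℕ) (hk : 1 < k) (hkn : 2 * k < n) :
    {p : ℕ × ℕ | ∃ x : Fin n → Bool, paretoOptimal leadingOnes (zeroJump n k) x ∧
        p = (leadingOnes x, zeroJump n k x)} =
      {((0 : ℕ), n + k)} ∪ {p : ℕ × ℕ | ∃ i : ℕ, k ≤ i ∧ i ≤ n ∧ p = (i, n + k - i)} := by
  have hkn' : k ≤ n := by omega
  ext p
  simp only [Set.mem_setOf_eq, Set.mem_union, Set.mem_singleton_iff]
  constructor
  · rintro ⟨x, hopt, rfl⟩
    by_cases hx0 : x = (fun _ => false)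
    · left; subst hx0
      rw [leadingOnes_zero, zeroJump_zero]
      simp [Nat.add_comm]
    · set z := zerosCount x with hz
      have hzle : z ≤ n := zerosCount_le x
      have hlo : leadingOnes x ≤ onesCount x := leadingOnes_le_onesCount x
      have hsum : onesCount x + z = n := ones_add_zeros x
      by_cases hzb : z ≤ n - k
      · have hf2 : zeroJump n k x = k + z := by
          unfold zeroJump; rw [if_pos (Or.inl hzb)]
        by_cases hik : leadingOnes x < k
        · exfalso
          apply hopt (pat n k)
          refine ⟨?_, ?_, Or.inl ?_⟩
          · rw [leadingOnes_pat n k hkn']; omega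
          · rw [hf2, zeroJump_pat n k k le_rfl hkn']; omega
          · rw [leadingOnes_pat n k hkn']; omega
        · push_neg at hik
          set i := leadingOnes x with hi
          have hin : i ≤ n := leadingOnes_le x
          have hzi : z ≤ n - i := by omega
          have hzeq : z = n - i := by
            by_contra hne
            apply hopt (pat n i)
            refine ⟨?_, ?_, Or.inr ?_⟩
            · rw [leadingOnes_pat n i hin]
            · rw [hf2, zeroJump_pat n k i hik hin]; omega
            · rw [hf2, zeroJump_pat n k i hik hin]; omega
          right
          refine ⟨i, hik, hin, ?_⟩
          rw [hf2, hzeq]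
          have : k + (n - i) = n + k - i := by omega
          rw [this]
      · exfalso
        push_neg at hzb
        have hf2 : zeroJump n k x = n - z := by
          unfold zeroJump; rw [if_neg (by push_neg; exact ⟨by omega, hx0⟩)]
        apply hopt (pat n k)
        refine ⟨?_, ?_, Or.inl ?_⟩
        · rw [leadingOnes_pat n k hkn']; omega
        · rw [hf2, zeroJump_pat n k k le_rfl hkn']; omega
        · rw [leadingOnes_pat n k hkn']; omega
  · rintro (rfl | ⟨i, hki, hin, rfl⟩)
    · refine ⟨fun _ => false, ?_, ?_⟩
      · rintro y ⟨h1, h2, h3⟩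
        rw [zeroJump_zero] at h2
        by_cases hy0 : y = (fun _ => false)
        · subst hy0
          rw [leadingOnes_zero] at h3
          rw [zeroJump_zero] at h3
          rcases h3 with h | h <;> omega
        · have hle := zeroJump_le hkn' y hy0
          omega
      · rw [leadingOnes_zero, zeroJump_zero]
        simp [Nat.add_comm]
    · refine ⟨pat n i, ?_, ?_⟩
      · rintro y ⟨h1, h2, h3⟩
        rw [leadingOnes_pat n i hin] at h1 h3
        rw [zeroJump_pat n k i hki hin] at h2 h3
        by_cases hy0 : y = (fun _ => false)
        · subst hy0
          rw [leadingOnes_zero] at h1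
          omega
        · have hsum := ones_add_zeros y
          have hlo := leadingOnes_le_onesCount y
          have hzle := zerosCount_le y
          by_cases hzb : zerosCount y ≤ n - k
          · have hf2 : zeroJump n k y = k + zerosCount y := by
              unfold zeroJump; rw [if_pos (Or.inl hzb)]
            rw [hf2] at h2 h3
            rcases h3 with h | h <;> omega
          · have hf2 : zeroJump n k y = n - zerosCount y := by
              unfold zeroJump; rw [if_neg (by push_neg; exact ⟨by omega, hy0⟩)]
            rw [hf2] at h2
            omega
      · rw [leadingOnes_pat n i hin, zeroJump_pat n k i hki hin]
        simp only [Prod.mk.injEq]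
        exact ⟨trivial, by omega⟩
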